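/- Let D = [[λ, 1], [0, λ]] with 0 < |λ| < 1. Then L = [[log λ, λ⁻¹], [0, log λ]] satisfies e^L = D (for some branch of log), and the numerical abscissa of L equals ln|λ| + 1/(2|λ|), which is strictly positive for all 0 < |λ| < 1. -/

import Mathlib

/-!
Write `L = w • 1 + N` with `N = !![0, λ⁻¹; 0, 0]`: the two summands commute and `N * N = 0`, so
`exp L = exp w • (1 + N) = λ • (1 + N)`, which is `D`. For a unit vector `x`,
`Re (x* L x) = Re w + Re (λ⁻¹ conj(x₀) x₁) ≤ Re w + ‖λ‖⁻¹ ‖x₀‖ ‖x₁‖ ≤ Re w + 1 / (2‖λ‖)`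
by `2 ‖x₀‖ ‖x₁‖ ≤ ‖x₀‖² + ‖x₁‖² = 1`, with equality when `‖x₀‖ = ‖x₁‖` and the phases align;
and `Re w = log ‖λ‖` because `‖exp w‖ = exp (Re w)`. Finally `log a + 1 / (2a)` is minimal at
`a = 1 / 2`, where it equals `1 - log 2 > 0`.
-/

open scoped Matrix
open Complex Real

/-- The numerical range of a square complex matrix. -/
def numRange {N : ℕ} (M : Matrix (Fin N) (Fin N) ℂ) : Set ℂ :=
  {z | ∃ x : EuclideanSpace ℂ (Fin N), ‖x‖ = 1 ∧ star (x : Fin N → ℂ) ⬝ᵥ M.mulVec x = z}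

/-- The numerical abscissa of a square complex matrix. -/
noncomputable def numAbs {N : ℕ} (M : Matrix (Fin N) (Fin N) ℂ) : ℝ :=
  sSup {r : ℝ | ∃ x : EuclideanSpace ℂ (Fin N), ‖x‖ = 1 ∧ (star (x : Fin N → ℂ) ⬝ᵥ M.mulVec x).re = r}

/-- The spectral (operator 2-)norm of a square complex matrix. -/
noncomputable def spec2 {N : ℕ} (M : Matrix (Fin N) (Fin N) ℂ) : ℝ :=
  ‖Matrix.toEuclideanCLM (𝕜 := ℂ) M‖

/-- The squared Frobenius norm of a square complex matrix. -/
noncomputable def frobSq {N : ℕ} (M : Matrix (Fin N) (Fin N) ℂ) : ℝ :=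
  ∑ i, ∑ j, ‖M i j‖ ^ 2

open ComplexConjugate

theorem NormedSpace.exp_eq_one_add_of_mul_self_eq_zero {𝔸 : Type*} [Ring 𝔸] [Algebra ℚ 𝔸]
    [TopologicalSpace 𝔸] [IsTopologicalRing 𝔸] {x : 𝔸} (hx : x * x = 0) :
    NormedSpace.exp x = 1 + x := by
  have hvanish : ∀ n ∉ Finset.range 2, ((n.factorial : ℚ)⁻¹ • x ^ n) = 0 := by
    intro n hn
    obtain ⟨k, rfl⟩ := Nat.exists_eq_add_of_le (not_lt.mp (Finset.mem_range.not.mp hn))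
    rw [pow_add, sq, hx, zero_mul, smul_zero]
  rw [NormedSpace.exp_eq_tsum_rat]
  beta_reduce
  rw [tsum_eq_sum hvanish]
  simp [Finset.sum_range_succ]

theorem Matrix.exp_upperTriangular_two {𝔸 : Type*} [NormedCommRing 𝔸] [NormedAlgebra ℚ 𝔸]
    [CompleteSpace 𝔸] (a b : 𝔸) :
    NormedSpace.exp !![a, b; 0, a] =
      !![NormedSpace.exp a, NormedSpace.exp a * b; 0, NormedSpace.exp a] := by
  have hsplit : !![a, b; 0, a] = diagonal (fun _ => a) + !![0, b; 0, 0] := by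
    ext i j; fin_cases i <;> fin_cases j <;> simp
  have hcomm : Commute (diagonal fun _ => a) !![0, b; 0, 0] := by
    rw [← smul_one_eq_diagonal]
    exact (Commute.one_left _).smul_left a
  have hnil : !![0, b; 0, 0] * !![0, b; 0, 0] = 0 := by
    ext i j; fin_cases i <;> fin_cases j <;> simp
  rw [hsplit, exp_add_of_commute _ _ hcomm, exp_diagonal, Pi.exp_def,
    NormedSpace.exp_eq_one_add_of_mul_self_eq_zero hnil]
  ext i j; fin_cases i <;> fin_cases j <;> simp

theorem EuclideanSpace.norm_sq_fin_two {𝕜 : Type*} [RCLike 𝕜] (x : EuclideanSpace 𝕜 (Fin 2)) :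
    ‖x‖ ^ 2 = ‖x 0‖ ^ 2 + ‖x 1‖ ^ 2 := by
  simp [EuclideanSpace.norm_sq_eq, Fin.sum_univ_two]

theorem Matrix.star_dotProduct_mulVec_upperTriangular_two (w b : ℂ)
    (x : EuclideanSpace ℂ (Fin 2)) :
    star (x : Fin 2 → ℂ) ⬝ᵥ !![w, b; 0, w] *ᵥ x = w * (‖x‖ ^ 2 : ℝ) + b * conj (x 0) * x 1 := by
  rw [EuclideanSpace.norm_sq_fin_two]
  push_cast
  rw [← conj_mul', ← conj_mul']
  simp only [dotProduct, mulVec, Fin.sum_univ_two, Pi.star_apply, RCLike.star_def, of_apply,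
    cons_val', cons_val_fin_one, cons_val_zero, cons_val_one]
  ring

theorem Matrix.isGreatest_re_quadForm_upperTriangular_two (w b : ℂ) :
    IsGreatest {r : ℝ | ∃ x : EuclideanSpace ℂ (Fin 2), ‖x‖ = 1 ∧
      (star (x : Fin 2 → ℂ) ⬝ᵥ (!![w, b; 0, w] : Matrix (Fin 2) (Fin 2) ℂ).mulVec x).re = r}
      (w.re + ‖b‖ / 2) := by
  have hre (x : EuclideanSpace ℂ (Fin 2)) (hx : ‖x‖ = 1) :
      (star (x : Fin 2 → ℂ) ⬝ᵥ !![w, b; 0, w] *ᵥ x).re = w.re + (b * conj (x 0) * x 1).re := by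
    rw [star_dotProduct_mulVec_upperTriangular_two, hx]
    simp
  constructor
  · set c : ℂ := (((√2)⁻¹ : ℝ) : ℂ)
    have hc : ‖c‖ ^ 2 = 1 / 2 := by
      rw [Complex.norm_real, Real.norm_eq_abs, sq_abs, inv_pow, Real.sq_sqrt zero_le_two]
      norm_num
    -- the phase of `x 1` cancels that of `b`
    let x : EuclideanSpace ℂ (Fin 2) := !₂[c, c * exp (-(b.arg * I))]
    have hx : ‖x‖ = 1 := by
      rw [← pow_eq_one_iff_of_nonneg (norm_nonneg x) two_ne_zero, EuclideanSpace.norm_sq_fin_two]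
      norm_num [x, norm_exp, hc]
    have hcc : conj c * c = 1 / 2 := by
      rw [conj_mul', ← ofReal_pow, hc]
      norm_num
    have hphase : b * exp (-(b.arg * I)) = ‖b‖ := by
      nth_rw 1 [← norm_mul_exp_arg_mul_I b]
      rw [mul_assoc, ← Complex.exp_add, add_neg_cancel, Complex.exp_zero, mul_one]
    refine ⟨x, hx, ?_⟩
    rw [hre x hx]
    change w.re + (b * conj c * (c * exp (-(b.arg * I)))).re = _
    rw [show b * conj c * (c * exp (-(b.arg * I))) = conj c * c * (b * exp (-(b.arg * I))) by ring,
      hcc, hphase]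
    norm_num [div_eq_inv_mul]
  · rintro r ⟨x, hx, rfl⟩
    rw [hre x hx, add_le_add_iff_left]
    have hsq : ‖x 0‖ ^ 2 + ‖x 1‖ ^ 2 = 1 := by rw [← EuclideanSpace.norm_sq_fin_two, hx, one_pow]
    calc (b * conj (x 0) * x 1).re ≤ ‖b‖ * (‖x 0‖ * ‖x 1‖) := by
          simpa [mul_assoc] using re_le_norm (b * conj (x 0) * x 1)
      _ ≤ ‖b‖ * (1 / 2) := by
          gcongr
          nlinarith [sq_nonneg (‖x 0‖ - ‖x 1‖)]
      _ = ‖b‖ / 2 := by ring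

theorem numAbs_upperTriangular_two (w b : ℂ) : numAbs !![w, b; 0, w] = w.re + ‖b‖ / 2 :=
  (Matrix.isGreatest_re_quadForm_upperTriangular_two w b).csSup_eq

theorem Real.log_add_one_div_two_mul_pos {a : ℝ} (ha : 0 < a) : 0 < log a + 1 / (2 * a) := by
  have hlog : log (2 * a)⁻¹ ≤ (2 * a)⁻¹ - 1 := log_le_sub_one_of_pos (by positivity)
  rw [log_inv, log_mul two_ne_zero ha.ne'] at hlog
  have hlog2 : log 2 < 1 := by linarith [log_two_lt_d9]
  rw [one_div]
  linarith

theorem stmt11_general (lam w : ℂ)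
    (hw : Complex.exp w = lam)
    (L : Matrix (Fin 2) (Fin 2) ℂ) (hL : L = !![w, lam⁻¹; 0, w]) :
    NormedSpace.exp L = !![lam, 1; 0, lam] ∧
      numAbs L = Real.log (‖lam‖) + 1 / (2 * ‖lam‖) ∧
      0 < Real.log (‖lam‖) + 1 / (2 * ‖lam‖) := by
  subst hL hw
  have hlog : Real.log ‖exp w‖ = w.re := by rw [norm_exp, Real.log_exp]
  refine ⟨?_, ?_, Real.log_add_one_div_two_mul_pos (norm_pos_iff.mpr (exp_ne_zero w))⟩
  · rw [Matrix.exp_upperTriangular_two, ← Complex.exp_eq_exp_ℂ, mul_inv_cancel₀ (exp_ne_zero w)]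
  · rw [numAbs_upperTriangular_two, hlog, norm_inv]
    ring

/-- For D = [[λ,1],[0,λ]] with 0 < |λ| < 1 and any branch w of log λ, the matrix
L = [[w, λ⁻¹],[0, w]] satisfies e^L = D, and ω(L) = ln|λ| + 1/(2|λ|) > 0. -/
theorem stmt11 (lam w : ℂ) (h0 : 0 < ‖lam‖) (h1 : ‖lam‖ < 1)
    (hw : Complex.exp w = lam)
    (L : Matrix (Fin 2) (Fin 2) ℂ) (hL : L = !![w, lam⁻¹; 0, w]) :
    NormedSpace.exp L = !![lam, 1; 0, lam] ∧
      numAbs L = Real.log (‖lam‖) + 1 / (2 * ‖lam‖) ∧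
      0 < Real.log (‖lam‖) + 1 / (2 * ‖lam‖) :=
  stmt11_general lam w hw L hL
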